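/- arXiv:2511.02760 — 5 statements merged into one kernel-verified Lean document; each statement's English description precedes it below -/
import Mathlib

section
/- Let E be a row-finite directed graph and H ⊆ E⁰ a hereditary, saturated subset. If E has distinct detours, then both the restriction graph E_H and the quotient graph E \ H have distinct detours. -/
structure DirGraph where
  V : Type
  E : Type
  r : E → V
  s : E → V

namespace DirGraph
variable (G : DirGraph)

/-- A vertex is a source if no edge has it as range. -/
def IsSource (v : G.V) : Prop := ∀ e : G.E, G.r e ≠ v

/-- Finite directed paths, written right to left: `DPath G a b` is a path with
source `a` and range `b`; `cons e p` prepends the edge `e` at the range side. -/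
inductive DPath : G.V → G.V → Type
  | nil (v : G.V) : DPath v v
  | cons (e : G.E) {a : G.V} (p : DPath a (G.s e)) : DPath a (G.r e)

variable {G}

def DPath.length : {a b : G.V} → DPath G a b → ℕ
  | _, _, .nil _ => 0
  | _, _, .cons _ p => p.length + 1

/-- The list of vertices along a finite path (range first). -/
def DPath.vertices : {a b : G.V} → DPath G a b → List G.V
  | _, _, .nil v => [v]
  | _, _, .cons e p => G.r e :: p.vertices

/-- The list of edges of a finite path (range-side edge first). -/
def DPath.edges : {a b : G.V} → DPath G a b → List G.E
  | _, _, .nil _ => []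
  | _, _, .cons e p => e :: p.edges

/-- A path is simple if no vertex repeats. -/
def DPath.Simple {a b : G.V} (p : DPath G a b) : Prop := p.vertices.Nodup

/-- Infinite backwards paths `μ₁μ₂μ₃⋯` with `s (μ n) = r (μ (n+1))`. -/
structure InfPath (G : DirGraph) where
  edge : ℕ → G.E
  adj : ∀ n, G.s (edge n) = G.r (edge (n + 1))

def InfPath.range (μ : InfPath G) : G.V := G.r (μ.edge 0)
def InfPath.vertexSet (μ : InfPath G) : Set G.V := Set.range fun n => G.r (μ.edge n)
def InfPath.edgeSet (μ : InfPath G) : Set G.E := Set.range μ.edge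
def InfPath.Simple (μ : InfPath G) : Prop := Function.Injective fun n => G.r (μ.edge n)

/-- A distinct detour for a finite path: a finite path with source and range on the
given path, containing an edge not on it. -/
def DPath.HasDistinctDetour {a b : G.V} (μ : DPath G a b) : Prop :=
  ∃ (c d : G.V) (ν : DPath G c d), c ∈ μ.vertices ∧ d ∈ μ.vertices ∧
    ∃ e ∈ ν.edges, e ∉ μ.edges

/-- A distinct detour for an infinite path. -/
def InfPath.HasDistinctDetour (μ : InfPath G) : Prop :=
  ∃ (c d : G.V) (ν : DPath G c d), c ∈ μ.vertexSet ∧ d ∈ μ.vertexSet ∧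
    ∃ e ∈ ν.edges, e ∉ μ.edgeSet

variable (G)

/-- `E` has distinct detours: every simple path in `E^{≤∞}` (finite paths starting at a
source, or infinite backwards paths) admits a distinct detour. -/
def HasDistinctDetours : Prop :=
  (∀ (a b : G.V) (μ : DPath G a b), G.IsSource a → μ.Simple → μ.HasDistinctDetour) ∧
  (∀ μ : InfPath G, μ.Simple → μ.HasDistinctDetour)

/-- `E` has no cycles: there are no nontrivial finite paths from a vertex to itself. -/
def NoCycles : Prop := ∀ (v : G.V) (p : DPath G v v), p.length = 0

def RowFinite : Prop := ∀ v : G.V, {e : G.E | G.r e = v}.Finite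

/-- `H` is hereditary: any vertex with a path to a vertex of `H` lies in `H`. -/
def Hereditary (H : Set G.V) : Prop := ∀ (a b : G.V), DPath G a b → b ∈ H → a ∈ H

/-- `H` is saturated: a vertex receiving at least one edge, all of whose incoming
edges have source in `H`, lies in `H`. -/
def Saturated (H : Set G.V) : Prop :=
  ∀ v : G.V, (∃ e, G.r e = v) → (∀ e, G.r e = v → G.s e ∈ H) → v ∈ H

/-- The restriction graph `E_H`: vertices `H`, edges with range in `H`. -/
def restrict (H : Set G.V) (hH : G.Hereditary H) : DirGraph where
  V := {v : G.V // v ∈ H}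
  E := {e : G.E // G.r e ∈ H}
  r := fun e => ⟨G.r e.1, e.2⟩
  s := fun e => ⟨G.s e.1, hH _ _ (.cons e.1 (.nil _)) e.2⟩

/-- The quotient graph `E \ H`: vertices `E⁰ \ H`, edges with source outside `H`. -/
def quotientGraph (H : Set G.V) (hH : G.Hereditary H) : DirGraph where
  V := {v : G.V // v ∉ H}
  E := {e : G.E // G.s e ∉ H}
  r := fun e => ⟨G.r e.1, fun hr => e.2 (hH _ _ (.cons e.1 (.nil _)) hr)⟩
  s := fun e => ⟨G.s e.1, e.2⟩


/-!
Both `E_H` and `E \ H` embed into `E`. Heredity makes every path of `E` between vertices of the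
subgraph a path of the subgraph, and the inclusion reflects sources (for `E \ H` by saturation).
So a simple path of the subgraph in its `E^{≤∞}` is a simple path of `E` in `E^{≤∞}`, and a
distinct detour for it in `E` lifts back to the subgraph.
-/

structure Hom (G' G : DirGraph) where
  onV : G'.V → G.V
  onE : G'.E → G.E
  map_r : ∀ e, onV (G'.r e) = G.r (onE e)
  map_s : ∀ e, onV (G'.s e) = G.s (onE e)

variable {G' G : DirGraph}

/-- `DPath.HasDistinctDetour` and `InfPath.HasDistinctDetour` are this condition for the vertices
and edges of the path. -/
def HasDistinctDetourOn (G : DirGraph) (Vs : Set G.V) (Es : Set G.E) : Prop :=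
  ∃ (c d : G.V) (ν : DPath G c d), c ∈ Vs ∧ d ∈ Vs ∧ ∃ e ∈ ν.edges, e ∉ Es

def Hom.LiftsPaths (φ : Hom G' G) : Prop :=
  ∀ (c d : G'.V) (ν : DPath G (φ.onV c) (φ.onV d)), ∃ ν' : DPath G' c d,
    ν'.edges.map φ.onE = ν.edges

theorem Hom.LiftsPaths.hasDistinctDetourOn {φ : Hom G' G} (hφ : φ.LiftsPaths)
    {Vs : Set G'.V} {Es : Set G'.E} (h : G.HasDistinctDetourOn (φ.onV '' Vs) (φ.onE '' Es)) :
    G'.HasDistinctDetourOn Vs Es := by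
  obtain ⟨-, -, ν, ⟨c, hc, rfl⟩, ⟨d, hd, rfl⟩, e, heν, heEs⟩ := h
  obtain ⟨ν', hν'⟩ := hφ c d ν
  rw [← hν', List.mem_map] at heν
  obtain ⟨e', he'ν', rfl⟩ := heν
  exact ⟨c, d, ν', hc, hd, e', he'ν', fun he' => heEs ⟨e', he', rfl⟩⟩

theorem DPath.exists_map (φ : Hom G' G) {a b : G'.V} (p : DPath G' a b) :
    ∃ q : DPath G (φ.onV a) (φ.onV b),
      q.vertices = p.vertices.map φ.onV ∧ q.edges = p.edges.map φ.onE := by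
  induction p with
  | nil v => exact ⟨.nil _, rfl, rfl⟩
  | cons e p ih =>
    obtain ⟨q, hqv, hqe⟩ := ih
    have hs := φ.map_s e
    have hr := φ.map_r e
    revert q
    rw [hs, hr]
    intro q hqv hqe
    exact ⟨.cons (φ.onE e) q, by simp [DPath.vertices, hqv, hr], by simp [DPath.edges, hqe]⟩

def InfPath.map (φ : Hom G' G) (μ : InfPath G') : InfPath G where
  edge n := φ.onE (μ.edge n)
  adj n := by rw [← φ.map_s, ← φ.map_r, μ.adj]

theorem InfPath.r_map_edge (φ : Hom G' G) (μ : InfPath G') :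
    (fun n => G.r ((μ.map φ).edge n)) = φ.onV ∘ fun n => G'.r (μ.edge n) :=
  funext fun n => (φ.map_r (μ.edge n)).symm

theorem InfPath.vertexSet_map (φ : Hom G' G) (μ : InfPath G') :
    (μ.map φ).vertexSet = φ.onV '' μ.vertexSet := by
  rw [InfPath.vertexSet, InfPath.r_map_edge, Set.range_comp, InfPath.vertexSet]

theorem InfPath.edgeSet_map (φ : Hom G' G) (μ : InfPath G') :
    (μ.map φ).edgeSet = φ.onE '' μ.edgeSet :=
  Set.range_comp φ.onE μ.edge

theorem InfPath.Simple.map {φ : Hom G' G} (hφ : Function.Injective φ.onV) {μ : InfPath G'}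
    (hμ : μ.Simple) : (μ.map φ).Simple := by
  rw [InfPath.Simple, InfPath.r_map_edge]
  exact hφ.comp hμ

theorem Hom.hasDistinctDetours (φ : Hom G' G) (hinj : Function.Injective φ.onV)
    (hlift : φ.LiftsPaths) (hsrc : ∀ v, G'.IsSource v → G.IsSource (φ.onV v))
    (hG : G.HasDistinctDetours) : G'.HasDistinctDetours := by
  refine ⟨fun a b μ ha hμ => ?_, fun μ hμ => ?_⟩
  · obtain ⟨q, hqv, hqe⟩ := μ.exists_map φ
    have hq : q.Simple := by
      rw [DPath.Simple, hqv]
      exact hμ.map hinj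
    refine hlift.hasDistinctDetourOn (Vs := {v | v ∈ μ.vertices}) (Es := {e | e ∈ μ.edges}) ?_
    have hdetour := hG.1 _ _ q (hsrc a ha) hq
    simp only [DPath.HasDistinctDetour, hqv, hqe, List.mem_map] at hdetour
    exact hdetour
  · have hdetour := hG.2 (μ.map φ) (hμ.map hinj)
    rw [InfPath.HasDistinctDetour, InfPath.vertexSet_map, InfPath.edgeSet_map] at hdetour
    exact hlift.hasDistinctDetourOn hdetour

def restrictIncl (G : DirGraph) (H : Set G.V) (hH : G.Hereditary H) : Hom (G.restrict H hH) G where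
  onV := Subtype.val
  onE := Subtype.val
  map_r _ := rfl
  map_s _ := rfl

def quotientGraphIncl (G : DirGraph) (H : Set G.V) (hH : G.Hereditary H) :
    Hom (G.quotientGraph H hH) G where
  onV := Subtype.val
  onE := Subtype.val
  map_r _ := rfl
  map_s _ := rfl

variable {H : Set G.V} {hH : G.Hereditary H}

theorem DPath.exists_restrict {c d : G.V} (ν : DPath G c d) (hd : d ∈ H) :
    ∃ (hc : c ∈ H) (ν' : DPath (G.restrict H hH) ⟨c, hc⟩ ⟨d, hd⟩),
      ν'.edges.map Subtype.val = ν.edges := by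
  induction ν with
  | nil v => exact ⟨hd, .nil _, rfl⟩
  | cons e p ih =>
    obtain ⟨hc, p', hp'⟩ := ih (hH _ _ (.cons e (.nil _)) hd)
    exact ⟨hc, .cons (G := G.restrict H hH) ⟨e, hd⟩ p', congrArg (e :: ·) hp'⟩

theorem DPath.exists_quotientGraph {c d : G.V} (ν : DPath G c d) (hc : c ∉ H) (hd : d ∉ H) :
    ∃ ν' : DPath (G.quotientGraph H hH) ⟨c, hc⟩ ⟨d, hd⟩,
      ν'.edges.map Subtype.val = ν.edges := by
  induction ν with
  | nil v => exact ⟨.nil _, rfl⟩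
  | cons e p ih =>
    have hs : G.s e ∉ H := fun h => hc (hH _ _ p h)
    obtain ⟨p', hp'⟩ := ih hc hs
    exact ⟨.cons (G := G.quotientGraph H hH) ⟨e, hs⟩ p', congrArg (e :: ·) hp'⟩

theorem restrictIncl_liftsPaths : (G.restrictIncl H hH).LiftsPaths := fun _ d ν =>
  let ⟨_, ν', hν'⟩ := ν.exists_restrict d.2
  ⟨ν', hν'⟩

theorem quotientGraphIncl_liftsPaths : (G.quotientGraphIncl H hH).LiftsPaths := fun c d ν =>
  ν.exists_quotientGraph c.2 d.2

theorem IsSource.of_restrict {v : (G.restrict H hH).V} (hv : (G.restrict H hH).IsSource v) :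
    G.IsSource v.1 := fun e he => hv ⟨e, he ▸ v.2⟩ (Subtype.ext he)

theorem IsSource.of_quotientGraph (hsat : G.Saturated H) {v : (G.quotientGraph H hH).V}
    (hv : (G.quotientGraph H hH).IsSource v) : G.IsSource v.1 := fun e he =>
  v.2 <| hsat v.1 ⟨e, he⟩ fun f hf => by_contra fun hfH => hv ⟨f, hfH⟩ (Subtype.ext hf)

end DirGraph

open DirGraph in
theorem restrict_quotient_hasDistinctDetours_general (G : DirGraph)
    (H : Set G.V) (hher : G.Hereditary H) (hsat : G.Saturated H)
    (hdd : G.HasDistinctDetours) :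
    (G.restrict H hher).HasDistinctDetours ∧ (G.quotientGraph H hher).HasDistinctDetours :=
  ⟨(G.restrictIncl H hher).hasDistinctDetours Subtype.val_injective restrictIncl_liftsPaths
      (fun _ => IsSource.of_restrict) hdd,
    (G.quotientGraphIncl H hher).hasDistinctDetours Subtype.val_injective
      quotientGraphIncl_liftsPaths (fun _ => IsSource.of_quotientGraph hsat) hdd⟩

open DirGraph in
/-- if a row-finite graph `E` has distinct detours and `H` is hereditary and
saturated, then both `E_H` and `E \ H` have distinct detours. -/
theorem restrict_quotient_hasDistinctDetours (G : DirGraph) (hrow : G.RowFinite)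
    (H : Set G.V) (hher : G.Hereditary H) (hsat : G.Saturated H)
    (hdd : G.HasDistinctDetours) :
    (G.restrict H hher).HasDistinctDetours ∧ (G.quotientGraph H hher).HasDistinctDetours :=
  restrict_quotient_hasDistinctDetours_general G H hher hsat hdd
end

section
/- Let E be a row-finite directed graph and H ⊆ E⁰ a hereditary, saturated subset. If both E_H and E \ H have distinct detours, then E has distinct detours. -/
/-!
`E_H` and `E \ H` are subgraphs of `E`, and a distinct detour of a path of a subgraph is one of
any path of `E` that contains it and shares with it every edge of the subgraph. Since `H` is
hereditary, a simple path of `E` either avoids `H` altogether, and is then a path of `E \ H`, or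
meets it in a segment at its source end (a tail, for an infinite path), which is a simple path
of `E_H` containing every edge of the path with range in `H`.
-/

namespace DirGraph

variable {G : DirGraph}

/-- Both notions of distinct detour are instances, with `S` and `T` the vertices and edges of
the path. -/
def HasDetour (S : Set G.V) (T : Set G.E) : Prop :=
  ∃ (c d : G.V) (ν : DPath G c d), c ∈ S ∧ d ∈ S ∧ ∃ e ∈ ν.edges, e ∉ T

theorem Hereditary.source_mem {H : Set G.V} (hher : G.Hereditary H) {e : G.E}
    (he : G.r e ∈ H) : G.s e ∈ H :=
  hher _ _ (.cons e (.nil _)) he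

section Subgraph

variable (G) in
def subgraph (P : G.V → Prop) (Q : G.E → Prop) (hr : ∀ e, Q e → P (G.r e))
    (hs : ∀ e, Q e → P (G.s e)) : DirGraph where
  V := {v // P v}
  E := {e // Q e}
  r e := ⟨G.r e.1, hr _ e.2⟩
  s e := ⟨G.s e.1, hs _ e.2⟩

variable {P : G.V → Prop} {Q : G.E → Prop} {hr : ∀ e, Q e → P (G.r e)}
  {hs : ∀ e, Q e → P (G.s e)}

theorem isSource_subgraph {v : G.V} (hv : P v) (h : G.IsSource v) :
    (G.subgraph P Q hr hs).IsSource ⟨v, hv⟩ :=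
  fun e he => h e.1 (congrArg Subtype.val he)

def DPath.ofSubgraph : {a b : (G.subgraph P Q hr hs).V} → DPath (G.subgraph P Q hr hs) a b →
    DPath G a.1 b.1
  | _, _, .nil v => .nil v.1
  | _, _, .cons e p => .cons e.1 p.ofSubgraph

theorem DPath.edges_ofSubgraph : ∀ {a b : (G.subgraph P Q hr hs).V}
    (p : DPath (G.subgraph P Q hr hs) a b), p.ofSubgraph.edges = p.edges.map Subtype.val
  | _, _, .nil _ => rfl
  | _, _, .cons e p => congrArg (e.1 :: ·) p.edges_ofSubgraph

variable (hr hs) in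
def DPath.toSubgraph : ∀ {a b : G.V} (p : DPath G a b) (ha : P a) (hb : P b),
    (∀ e ∈ p.edges, Q e) → DPath (G.subgraph P Q hr hs) ⟨a, ha⟩ ⟨b, hb⟩
  | _, _, .nil v, ha, _, _ => .nil (G := G.subgraph P Q hr hs) ⟨v, ha⟩
  | _, _, .cons e p, ha, _, hp =>
      .cons (G := G.subgraph P Q hr hs) ⟨e, hp e List.mem_cons_self⟩
        (p.toSubgraph ha _ fun f hf => hp f (List.mem_cons_of_mem e hf))

theorem DPath.vertices_toSubgraph : ∀ {a b : G.V} (p : DPath G a b) (ha : P a) (hb : P b)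
    (hp : ∀ e ∈ p.edges, Q e),
    (p.toSubgraph hr hs ha hb hp).vertices.map Subtype.val = p.vertices
  | _, _, .nil _, _, _, _ => rfl
  | _, _, .cons e p, _, _, _ => congrArg (G.r e :: ·) (p.vertices_toSubgraph _ _ _)

theorem DPath.edges_toSubgraph : ∀ {a b : G.V} (p : DPath G a b) (ha : P a) (hb : P b)
    (hp : ∀ e ∈ p.edges, Q e), (p.toSubgraph hr hs ha hb hp).edges.map Subtype.val = p.edges
  | _, _, .nil _, _, _, _ => rfl
  | _, _, .cons e p, _, _, _ => congrArg (e :: ·) (p.edges_toSubgraph _ _ _)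

theorem HasDetour.of_subgraph {S' : Set (G.subgraph P Q hr hs).V}
    {T' : Set (G.subgraph P Q hr hs).E} (h : HasDetour S' T') {S : Set G.V} {T : Set G.E}
    (hS : ∀ v ∈ S', v.1 ∈ S) (hT : ∀ e ∈ T, (he : Q e) → ⟨e, he⟩ ∈ T') :
    G.HasDetour S T := by
  obtain ⟨c, d, ν, hc, hd, e, he, heT'⟩ := h
  refine ⟨c.1, d.1, ν.ofSubgraph, hS c hc, hS d hd, e.1, ?_, fun heT => heT' (hT e.1 heT e.2)⟩
  rw [DPath.edges_ofSubgraph]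
  exact List.mem_map_of_mem he

theorem DPath.hasDistinctDetour_of_subgraph (h : (G.subgraph P Q hr hs).HasDistinctDetours)
    {a b c : G.V} (μ : DPath G a b) (q : DPath G a c) (hsrc : G.IsSource a) (hq : q.Simple)
    (ha : P a) (hc : P c) (hqQ : ∀ e ∈ q.edges, Q e) (hsub : q.vertices ⊆ μ.vertices)
    (hcap : ∀ e ∈ μ.edges, Q e → e ∈ q.edges) : μ.HasDistinctDetour := by
  have hρ : (q.toSubgraph hr hs ha hc hqQ).Simple := by
    rw [DPath.Simple, ← q.vertices_toSubgraph ha hc hqQ] at hq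
    exact hq.of_map _
  refine HasDetour.of_subgraph (h.1 _ _ _ (isSource_subgraph ha hsrc) hρ)
    (fun v hv => hsub ?_) (fun e he hQ => ?_)
  · exact q.vertices_toSubgraph ha hc hqQ ▸ List.mem_map_of_mem hv
  · have : e ∈ (q.toSubgraph hr hs ha hc hqQ).edges.map Subtype.val :=
      (q.edges_toSubgraph ha hc hqQ).symm ▸ hcap e he hQ
    obtain ⟨e', he', rfl⟩ := List.mem_map.mp this
    exact he'

variable (hr hs) in
def InfPath.toSubgraph (μ : InfPath G) (h : ∀ n, Q (μ.edge n)) :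
    InfPath (G.subgraph P Q hr hs) where
  edge n := ⟨μ.edge n, h n⟩
  adj n := Subtype.ext (μ.adj n)

theorem InfPath.hasDistinctDetour_of_subgraph (h : (G.subgraph P Q hr hs).HasDistinctDetours)
    (μ ν : InfPath G) (hν : ν.Simple) (hνQ : ∀ n, Q (ν.edge n))
    (hsub : ν.vertexSet ⊆ μ.vertexSet) (hcap : ∀ e ∈ μ.edgeSet, Q e → e ∈ ν.edgeSet) :
    μ.HasDistinctDetour := by
  refine HasDetour.of_subgraph
    (h.2 (ν.toSubgraph hr hs hνQ) fun _ _ hij => hν (congrArg Subtype.val hij)) ?_ ?_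
  · rintro _ ⟨n, rfl⟩
    exact hsub ⟨n, rfl⟩
  · intro e he hQ
    obtain ⟨n, rfl⟩ := hcap e he hQ
    exact ⟨n, rfl⟩

end Subgraph

variable {H : Set G.V}

theorem restrict_eq_subgraph (hher : G.Hereditary H) :
    G.restrict H hher =
      G.subgraph (· ∈ H) (fun e => G.r e ∈ H) (fun _ => id) (fun _ => hher.source_mem) :=
  rfl

theorem quotientGraph_eq_subgraph (hher : G.Hereditary H) :
    G.quotientGraph H hher =
      G.subgraph (· ∉ H) (fun e => G.s e ∉ H) (fun _ hs hr => hs (hher.source_mem hr))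
        (fun _ => id) :=
  rfl

theorem DPath.range_mem_edges_of_range_mem (hher : G.Hereditary H) :
    ∀ {a b : G.V} (p : DPath G a b), b ∈ H → ∀ e ∈ p.edges, G.r e ∈ H
  | _, _, .cons _ p, hb, _, he => by
      rcases List.mem_cons.mp he with rfl | he
      · exact hb
      · exact p.range_mem_edges_of_range_mem hher (hher.source_mem hb) _ he

theorem DPath.source_not_mem_edges_of_source_not_mem (hher : G.Hereditary H) :
    ∀ {a b : G.V} (p : DPath G a b), a ∉ H → ∀ e ∈ p.edges, G.s e ∉ H
  | _, _, .cons _ p, ha, _, he => by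
      rcases List.mem_cons.mp he with rfl | he
      · exact fun hs => ha (hher _ _ p hs)
      · exact p.source_not_mem_edges_of_source_not_mem hher ha _ he

theorem DPath.exists_prefix_mem : ∀ {a b : G.V} (μ : DPath G a b), a ∈ H →
    ∃ c ∈ H, ∃ q : DPath G a c, q.vertices.Sublist μ.vertices ∧
      ∀ e ∈ μ.edges, G.r e ∈ H → e ∈ q.edges
  | _, _, .nil a, ha => ⟨a, ha, .nil a, .refl _, fun _ he => nomatch he⟩
  | _, _, .cons e p, ha => by
      by_cases hre : G.r e ∈ H
      · exact ⟨_, hre, .cons e p, .refl _, fun _ hf _ => hf⟩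
      obtain ⟨c, hc, q, hsub, hcap⟩ := p.exists_prefix_mem ha
      refine ⟨c, hc, q, hsub.cons _, fun f hf hrf => ?_⟩
      rcases List.mem_cons.mp hf with rfl | hf
      · exact absurd hrf hre
      · exact hcap f hf hrf

theorem InfPath.exists_tail_mem (hher : G.Hereditary H) (μ : InfPath G)
    (hex : ∃ n, G.r (μ.edge n) ∈ H) :
    ∃ m, (∀ n, G.r (μ.edge (m + n)) ∈ H) ∧ ∀ k, G.r (μ.edge k) ∈ H → m ≤ k := by
  classical
  refine ⟨Nat.find hex, fun n => ?_, fun k hk => Nat.find_min' hex hk⟩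
  induction n with
  | zero => exact Nat.find_spec hex
  | succ n ih => exact μ.adj _ ▸ hher.source_mem ih

theorem DPath.hasDistinctDetour_of_source_mem (hher : G.Hereditary H)
    (h1 : (G.restrict H hher).HasDistinctDetours) {a b : G.V} (μ : DPath G a b)
    (hsrc : G.IsSource a) (hμ : μ.Simple) (ha : a ∈ H) : μ.HasDistinctDetour := by
  rw [restrict_eq_subgraph] at h1
  obtain ⟨c, hc, q, hsub, hcap⟩ := μ.exists_prefix_mem ha
  exact μ.hasDistinctDetour_of_subgraph h1 q hsrc (hsub.nodup hμ) ha hc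
    (q.range_mem_edges_of_range_mem hher hc) hsub.subset hcap

theorem DPath.hasDistinctDetour_of_source_not_mem (hher : G.Hereditary H)
    (h2 : (G.quotientGraph H hher).HasDistinctDetours) {a b : G.V} (μ : DPath G a b)
    (hsrc : G.IsSource a) (hμ : μ.Simple) (ha : a ∉ H) : μ.HasDistinctDetour := by
  rw [quotientGraph_eq_subgraph] at h2
  exact μ.hasDistinctDetour_of_subgraph h2 μ hsrc hμ ha (fun hb => ha (hher _ _ μ hb))
    (μ.source_not_mem_edges_of_source_not_mem hher ha) (List.Subset.refl _) fun _ he _ => he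

theorem InfPath.hasDistinctDetour_of_exists_mem (hher : G.Hereditary H)
    (h1 : (G.restrict H hher).HasDistinctDetours) (μ : InfPath G) (hμ : μ.Simple)
    (hex : ∃ n, G.r (μ.edge n) ∈ H) : μ.HasDistinctDetour := by
  rw [restrict_eq_subgraph] at h1
  obtain ⟨m, htail, hmin⟩ := μ.exists_tail_mem hher hex
  refine μ.hasDistinctDetour_of_subgraph h1 ⟨fun n => μ.edge (m + n), fun n => μ.adj (m + n)⟩
    (fun i j hij => by simpa using hμ hij) htail ?_ ?_
  · rintro _ ⟨n, rfl⟩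
    exact ⟨m + n, rfl⟩
  · rintro _ ⟨k, rfl⟩ hk
    exact ⟨k - m, by simp only [Nat.add_sub_cancel' (hmin k hk)]⟩

theorem InfPath.hasDistinctDetour_of_forall_not_mem (hher : G.Hereditary H)
    (h2 : (G.quotientGraph H hher).HasDistinctDetours) (μ : InfPath G) (hμ : μ.Simple)
    (hnot : ∀ n, G.r (μ.edge n) ∉ H) : μ.HasDistinctDetour := by
  rw [quotientGraph_eq_subgraph] at h2
  exact μ.hasDistinctDetour_of_subgraph h2 μ hμ (fun n => μ.adj n ▸ hnot (n + 1)) subset_rfl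
    fun _ he _ => he

end DirGraph

open DirGraph in
theorem hasDistinctDetours_of_restrict_quotient_general (G : DirGraph)
    (H : Set G.V) (hher : G.Hereditary H)
    (h1 : (G.restrict H hher).HasDistinctDetours)
    (h2 : (G.quotientGraph H hher).HasDistinctDetours) :
    G.HasDistinctDetours := by
  refine ⟨fun a b μ hsrc hμ => ?_, fun μ hμ => ?_⟩
  · by_cases ha : a ∈ H
    · exact μ.hasDistinctDetour_of_source_mem hher h1 hsrc hμ ha
    · exact μ.hasDistinctDetour_of_source_not_mem hher h2 hsrc hμ ha
  · by_cases hex : ∃ n, G.r (μ.edge n) ∈ H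
    · exact μ.hasDistinctDetour_of_exists_mem hher h1 hμ hex
    · exact μ.hasDistinctDetour_of_forall_not_mem hher h2 hμ (not_exists.mp hex)

open DirGraph in
/-- if `H` is hereditary and saturated in a row-finite graph `E`, and both
`E_H` and `E \ H` have distinct detours, then so does `E`. -/
theorem hasDistinctDetours_of_restrict_quotient (G : DirGraph) (hrow : G.RowFinite)
    (H : Set G.V) (hher : G.Hereditary H) (hsat : G.Saturated H)
    (h1 : (G.restrict H hher).HasDistinctDetours)
    (h2 : (G.quotientGraph H hher).HasDistinctDetours) :
    G.HasDistinctDetours :=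
  hasDistinctDetours_of_restrict_quotient_general G H hher h1 h2
end

section
/- Hence, for a finite directed graph E, E has distinct detours if and only if E has no sources. -/
open DirGraph in
/-- a finite graph has distinct detours if and only if it has no sources. -/
theorem finite_hasDistinctDetours_iff_no_sources (G : DirGraph)
    [Finite G.V] [Finite G.E] :
    G.HasDistinctDetours ↔ ∀ v : G.V, ¬ G.IsSource v := by
  constructor
  · rintro ⟨h1, _⟩ v hv
    obtain ⟨c, d, ν, hc, hd, e, he, -⟩ :=
      h1 v v (.nil v) hv (by simp [DPath.Simple, DPath.vertices])
    simp [DPath.vertices] at hd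
    cases ν with
    | nil w => simp [DPath.edges] at he
    | cons e' p => exact hv e' hd
  · intro h
    refine ⟨fun a b μ ha _ => absurd ha (h a), fun μ hμ => ?_⟩
    have : Finite ℕ := Finite.of_injective _ hμ
    exact (not_finite ℕ).elim
end

section
/- Let E be a directed graph with no cycles that has distinct detours, and suppose u₀, u₁, u₂, … is an infinite sequence of vertices such that for each n there is an edge from u_{n+1} to u_n (so the sequence defines an infinite backwards path μ with pairwise distinct vertices). Then some u_l has at least two distinct paths to u₀. -/
namespace DirGraph

variable {G : DirGraph}

/-- A single-edge path with cast endpoints. -/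
def edge1 (ed : G.E) {a b : G.V} (ha : G.s ed = a) (hb : G.r ed = b) : DPath G a b := by
  subst ha hb; exact .cons ed (.nil _)

lemma edge1_edges (ed : G.E) {a b : G.V} (ha : G.s ed = a) (hb : G.r ed = b) :
    (edge1 ed ha hb).edges = [ed] := by subst ha hb; rfl

lemma edge1_length (ed : G.E) {a b : G.V} (ha : G.s ed = a) (hb : G.r ed = b) :
    (edge1 ed ha hb).length = 1 := by subst ha hb; rfl

/-- Concatenation of paths. -/
def DPath.append : {a b c : G.V} → DPath G a b → DPath G b c → DPath G a c
  | _, _, _, p, .nil _ => p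
  | _, _, _, p, .cons ed q => .cons ed (p.append q)

lemma DPath.append_edges {a b c : G.V} (p : DPath G a b) (q : DPath G b c) :
    (p.append q).edges = q.edges ++ p.edges := by
  induction q with
  | nil => simp [DPath.append, DPath.edges]
  | cons ed q ih => simp [DPath.append, DPath.edges, ih]

lemma DPath.append_length {a b c : G.V} (p : DPath G a b) (q : DPath G b c) :
    (p.append q).length = p.length + q.length := by
  induction q with
  | nil => simp [DPath.append, DPath.length]
  | cons ed q ih => simp [DPath.append, DPath.length, ih]; omega

section Seq

variable (u : ℕ → G.V) (e : ℕ → G.E)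
  (hs : ∀ n, G.s (e n) = u (n + 1)) (hr : ∀ n, G.r (e n) = u n)

/-- Path from `u (m + k)` down to `u m`. -/
def down (m : ℕ) : (k : ℕ) → DPath G (u (m + k)) (u m)
  | 0 => .nil _
  | k + 1 => (edge1 (e (m + k)) (hs (m + k)) (hr (m + k))).append (down m k)

lemma down_length (m k : ℕ) : (down u e hs hr m k).length = k := by
  induction k with
  | zero => rfl
  | succ k ih =>
      simp [down, DPath.append_length, edge1_length, ih]
      omega

lemma down_edges_mem (m k : ℕ) {x : G.E} (hx : x ∈ (down u e hs hr m k).edges) :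
    ∃ i, e i = x := by
  induction k with
  | zero => simp [down, DPath.edges] at hx
  | succ k ih =>
      simp [down, DPath.append_edges, edge1_edges] at hx
      rcases hx with hx | rfl
      · exact ih hx
      · exact ⟨m + k, rfl⟩

/-- Path from `u k` down to `u 0`. -/
def downZ : (k : ℕ) → DPath G (u k) (u 0)
  | 0 => .nil _
  | k + 1 => (edge1 (e k) (hs k) (hr k)).append (downZ k)

lemma downZ_edges_mem (k : ℕ) {x : G.E} (hx : x ∈ (downZ u e hs hr k).edges) :
    ∃ i, e i = x := by
  induction k with
  | zero => simp [downZ, DPath.edges] at hx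
  | succ k ih =>
      simp [downZ, DPath.append_edges, edge1_edges] at hx
      rcases hx with hx | rfl
      · exact ih hx
      · exact ⟨k, rfl⟩

end Seq

lemma noCycles_length_eq_zero (hnc : G.NoCycles) {a b : G.V} (p : DPath G a b)
    (h : a = b) : p.length = 0 := by
  subst h; exact hnc _ p

end DirGraph

open DirGraph in
/-- in a graph with no cycles having distinct detours, any infinite
backwards sequence of vertices `u₀, u₁, u₂, …` connected by edges (from `u_{n+1}` to
`u_n`) has some `u_l` with at least two distinct paths to `u₀`. -/
theorem two_paths_of_infinite_sequence (G : DirGraph) (hnc : G.NoCycles)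
    (hdd : G.HasDistinctDetours) (u : ℕ → G.V)
    (hu : ∀ n, ∃ e : G.E, G.s e = u (n + 1) ∧ G.r e = u n) :
    ∃ l, ∃ p q : DirGraph.DPath G (u l) (u 0), p ≠ q := by
  choose e hs hr using hu
  -- u is injective
  have huinj : Function.Injective u := by
    intro m n hmn
    by_contra hne
    rcases Nat.lt_or_ge m n with hlt | hge
    · obtain ⟨k, hk⟩ : ∃ k, m + k = n := ⟨n - m, by omega⟩
      have hk0 : k ≠ 0 := by omega
      have h0 := noCycles_length_eq_zero hnc (down u e hs hr m k)
        (by rw [hk, hmn])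
      rw [down_length] at h0
      exact hk0 h0
    · have hlt : n < m := by omega
      obtain ⟨k, hk⟩ : ∃ k, n + k = m := ⟨m - n, by omega⟩
      have hk0 : k ≠ 0 := by omega
      have h0 := noCycles_length_eq_zero hnc (down u e hs hr n k)
        (by rw [hk, hmn])
      rw [down_length] at h0
      exact hk0 h0
  -- the infinite path
  set μ : InfPath G := ⟨e, fun n => by rw [hs n, hr (n + 1)]⟩ with hμ
  have hμr : ∀ n, G.r (μ.edge n) = u n := hr
  have hsimple : μ.Simple := by
    intro m n hmn
    simp only [hμr] at hmn
    exact huinj hmn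
  obtain ⟨c, d, ν, hc, hd, e', he'ν, he'μ⟩ := hdd.2 μ hsimple
  obtain ⟨i, hi⟩ := hc
  obtain ⟨j, hj⟩ := hd
  simp only [hμr] at hi hj
  subst hi hj
  refine ⟨i, downZ u e hs hr i, ν.append (downZ u e hs hr j), ?_⟩
  intro hpq
  have hedges : (downZ u e hs hr i).edges = (ν.append (downZ u e hs hr j)).edges :=
    congrArg DPath.edges hpq
  have he'p : e' ∈ (downZ u e hs hr i).edges := by
    rw [hedges, DPath.append_edges]
    exact List.mem_append_right _ he'ν
  obtain ⟨l, hl⟩ := downZ_edges_mem u e hs hr i he'p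
  exact he'μ ⟨l, hl⟩
end

section
/- Let A be a C*-algebra with ideals J ⊴ I ⊴ A. If (I/J) ⊗ K (tensor with the compact operators on a separable infinite-dimensional Hilbert space) is isomorphic to K(H) for some Hilbert space H, then I/J is itself isomorphic to K(H') for some Hilbert space H'. -/
/-!
Let `c ∈ K` be a rank-one projection, so that `c K c = ℂ c`. Then `q ↦ q ⊗ c` embeds `Q` into
`Q ⊗ K ≅ K(H)` with hereditary image, since `(r ⊗ c) (q ⊗ k) (s ⊗ c) = r q s ⊗ c k c` and the
`q ⊗ k` span a dense subspace. A C*-algebra `j(Q) ⊆ K(H)` that is hereditary in this sense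
contains every rank-one operator between vectors of its essential subspace
`H' = closure (span (⋃ q, range (j q)))`. Compact operators being norm limits of finite sums of
rank-one operators, the compression of `j` to `H'` is then an isomorphism onto `K(H')`.
-/

noncomputable section

/-- `C` is (isomorphic to) the algebra of compact operators on the Hilbert space `H`:
there is an injective `*`-homomorphism `C → B(H)` whose range is exactly the set of
compact operators. -/
def IsCompactsOn (H : Type) [NormedAddCommGroup H] [InnerProductSpace ℂ H]
    [CompleteSpace H] (C : Type*) [NonUnitalCStarAlgebra C] : Prop :=
  ∃ φ : C →⋆ₙₐ[ℂ] (H →L[ℂ] H), Function.Injective φ ∧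
    Set.range φ = {T : H →L[ℂ] H | IsCompactOperator T}

/-- A C*-algebra is elementary if it is isomorphic to `K(H)` for some Hilbert space. -/
def IsElementary (C : Type*) [NonUnitalCStarAlgebra C] : Prop :=
  ∃ (H : Type) (_ : NormedAddCommGroup H) (_ : InnerProductSpace ℂ H) (_ : CompleteSpace H),
    IsCompactsOn H C

/-- The C*-algebra `K` of compact operators on the separable infinite-dimensional Hilbert
space `ℓ²(ℕ)`. -/
def IsStdCompacts (K : Type*) [NonUnitalCStarAlgebra K] : Prop :=
  IsCompactsOn (lp (fun _ : ℕ => ℂ) 2) K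

/-- `T` is a C*-tensor product of `B` and `C`: there is a bilinear, multiplicative,
star-preserving pairing `B × C → T` which is injective on the algebraic tensor product
`B ⊗ C` and has dense span.  (When `C` is nuclear—e.g. the compact operators—this
determines `T` up to isomorphism as `B ⊗ C`.) -/
structure IsCStarTensor (B C T : Type*) [NonUnitalCStarAlgebra B] [NonUnitalCStarAlgebra C]
    [NonUnitalCStarAlgebra T] : Prop where
  exists_pairing :
    ∃ t : B →ₗ[ℂ] C →ₗ[ℂ] T,
      (∀ (b b' : B) (c c' : C), t b c * t b' c' = t (b * b') (c * c')) ∧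
      (∀ (b : B) (c : C), star (t b c) = t (star b) (star c)) ∧
      Function.Injective (TensorProduct.lift t) ∧
      DenseRange (TensorProduct.lift t)

end

open InnerProductSpace ContinuousLinearMap

section Hilbert
variable {𝕜 E F : Type*} [RCLike 𝕜] [NormedAddCommGroup E] [InnerProductSpace 𝕜 E]
  [NormedAddCommGroup F] [InnerProductSpace 𝕜 F]

theorem InnerProductSpace.isCompactOperator_rankOne (x : E) (y : F) :
    IsCompactOperator (rankOne 𝕜 x y) :=
  (isCompactOperator_of_locallyCompactSpace_rng (toSpanSingleton 𝕜 x)).comp_clm (innerSL 𝕜 y)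

theorem norm_sub_starProjection_comp_le {U : Submodule 𝕜 F} [U.HasOrthogonalProjection]
    {S : E →L[𝕜] F} {ε : ℝ} (hε : 0 ≤ ε) (h : ∀ x : E, ‖x‖ = 1 → ∃ y ∈ U, ‖S x - y‖ ≤ ε) :
    ‖S - U.starProjection ∘L S‖ ≤ ε := by
  refine opNorm_le_of_unit_norm hε fun x hx => ?_
  obtain ⟨y, hyU, hy⟩ := h x hx
  calc ‖(S - U.starProjection ∘L S) x‖ = ‖S x - U.starProjection (S x)‖ := rfl
    _ = ⨅ z : U, ‖S x - z‖ := Submodule.starProjection_minimal _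
    _ ≤ ‖S x - y‖ := ciInf_le ⟨0, Set.forall_mem_range.mpr fun _ => norm_nonneg _⟩ (⟨y, hyU⟩ : U)
    _ ≤ ε := hy

theorem IsCompactOperator.mem_of_forall_rankOne_mem [CompleteSpace E] [CompleteSpace F]
    {N : Submodule 𝕜 (E →L[𝕜] F)} (hN : IsClosed (N : Set (E →L[𝕜] F)))
    (hrank : ∀ x y, rankOne 𝕜 x y ∈ N) {S : E →L[𝕜] F} (hS : IsCompactOperator S) : S ∈ N := by
  rw [← SetLike.mem_coe, ← hN.closure_eq, Metric.mem_closure_iff]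
  intro ε hε
  obtain ⟨C, hC, hSC⟩ := hS.image_closedBall_subset_compact (1 : ℝ)
  obtain ⟨t, ht, hcover⟩ :=
    Metric.totallyBounded_iff.mp (hC.totallyBounded.subset hSC) (ε / 2) (half_pos hε)
  let U := Submodule.span 𝕜 t
  have : FiniteDimensional 𝕜 U := FiniteDimensional.span_of_finite 𝕜 ht
  refine ⟨U.starProjection ∘L S, ?_, ?_⟩
  · let b := stdOrthonormalBasis 𝕜 U
    rw [b.starProjection_eq_sum_rankOne, finsetSum_comp]
    exact N.sum_mem fun i _ => (rankOne_comp (b _ : F) (b _ : F) S).symm ▸ hrank _ _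
  · rw [dist_eq_norm]
    refine (norm_sub_starProjection_comp_le (half_pos hε).le fun x hx => ?_).trans_lt
      (half_lt_self hε)
    obtain ⟨y, hyt, hy⟩ := Set.mem_iUnion₂.mp (hcover ⟨x, by simp [hx], rfl⟩)
    exact ⟨y, Submodule.subset_span hyt, (dist_eq_norm (S x) y ▸ Metric.mem_ball.mp hy).le⟩

theorem rankOne_mem_of_mem_topologicalClosure_span {N : Submodule 𝕜 (F →L[𝕜] E)}
    (hN : IsClosed (N : Set (F →L[𝕜] E))) {G : Set E} {y : F}
    (hG : ∀ x ∈ G, rankOne 𝕜 x y ∈ N) {x : E}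
    (hx : x ∈ (Submodule.span 𝕜 G).topologicalClosure) : rankOne 𝕜 x y ∈ N := by
  let f : E →L[𝕜] F →L[𝕜] E := (rankOne 𝕜).flip y
  have hle : (Submodule.span 𝕜 G).topologicalClosure ≤ N.comap (f : E →ₗ[𝕜] F →L[𝕜] E) :=
    Submodule.topologicalClosure_minimal _ (Submodule.span_le.mpr hG) (hN.preimage f.continuous)
  exact hle hx

end Hilbert

namespace NonUnitalStarAlgHom

theorem isClosed_range {A B : Type*} [NonUnitalCStarAlgebra A] [NonUnitalCStarAlgebra B]
    (φ : A →⋆ₙₐ[ℂ] B) (hφ : Function.Injective φ) : IsClosed (Set.range φ) :=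
  (NonUnitalStarAlgHom.isometry φ hφ).isClosedEmbedding.isClosed_range

section Restrict

variable {Q H : Type*} [NonUnitalCStarAlgebra Q] [NormedAddCommGroup H] [InnerProductSpace ℂ H]
  [CompleteSpace H] (j : Q →⋆ₙₐ[ℂ] (H →L[ℂ] H))

def essentialSubspace : Submodule ℂ H :=
  (Submodule.span ℂ (⋃ q, Set.range (j q))).topologicalClosure

instance : CompleteSpace j.essentialSubspace :=
  (Submodule.isClosed_topologicalClosure _).completeSpace_coe

theorem apply_mem_essentialSubspace (q : Q) (x : H) : j q x ∈ j.essentialSubspace :=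
  Submodule.le_topologicalClosure _ (Submodule.subset_span (Set.mem_iUnion.mpr ⟨q, x, rfl⟩))

noncomputable def restrictEssential :
    Q →⋆ₙₐ[ℂ] (j.essentialSubspace →L[ℂ] j.essentialSubspace) where
  toFun q := (j q).restrict fun x _ => j.apply_mem_essentialSubspace q x
  map_add' _ _ := by ext; simp
  map_smul' _ _ := by ext; simp
  map_zero' := by ext; simp
  map_mul' _ _ := by ext; simp
  map_star' q := by
    refine (eq_adjoint_iff _ _).mpr fun x y => ?_
    simp [Submodule.coe_inner, map_star, star_eq_adjoint, adjoint_inner_left]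

@[simp]
theorem coe_restrictEssential_apply (q : Q) (x : j.essentialSubspace) :
    (j.restrictEssential q x : H) = j q x :=
  rfl

theorem restrictEssential_injective (hj : Function.Injective j) :
    Function.Injective j.restrictEssential := by
  refine (injective_iff_map_eq_zero _).mpr fun q hq => ?_
  have : j (q * star q) = 0 := by
    ext x
    simpa using congr(($hq ⟨_, j.apply_mem_essentialSubspace (star q) x⟩ : H))
  exact (CStarRing.mul_star_self_eq_zero_iff q).mp (hj (by rwa [map_zero]))

theorem rankOne_mem_range_of_mem_essentialSubspace (hj : Function.Injective j)
    (hrank : ∀ (r s : Q) (x y : H), rankOne ℂ (j r x) (j s y) ∈ Set.range j) {x y : H}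
    (hx : x ∈ j.essentialSubspace) (hy : y ∈ j.essentialSubspace) :
    rankOne ℂ x y ∈ Set.range j := by
  let N := LinearMap.range (j : Q →ₗ[ℂ] (H →L[ℂ] H))
  have hN : IsClosed (N : Set (H →L[ℂ] H)) := j.isClosed_range hj
  have hswap {x y : H} : rankOne ℂ x y ∈ N → rankOne ℂ y x ∈ N := by
    rintro ⟨q, hq⟩
    exact ⟨star q, by simp_all [map_star, star_eq_adjoint]⟩
  have hx' (s : Q) (z : H) : rankOne ℂ x (j s z) ∈ N := by
    refine rankOne_mem_of_mem_topologicalClosure_span hN ?_ hx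
    rintro _ ⟨_, ⟨r, rfl⟩, w, rfl⟩
    exact hrank r s w z
  refine hswap (rankOne_mem_of_mem_topologicalClosure_span hN ?_ hy)
  rintro _ ⟨_, ⟨s, rfl⟩, z, rfl⟩
  exact hswap (hx' s z)

end Restrict

theorem isElementary_of_rankOne_mem_range {Q : Type*} [NonUnitalCStarAlgebra Q] {H : Type}
    [NormedAddCommGroup H] [InnerProductSpace ℂ H] [CompleteSpace H] (j : Q →⋆ₙₐ[ℂ] (H →L[ℂ] H))
    (hj : Function.Injective j) (hcpt : ∀ q, IsCompactOperator (j q))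
    (hrank : ∀ (r s : Q) (x y : H), rankOne ℂ (j r x) (j s y) ∈ Set.range j) :
    IsElementary Q := by
  let V := j.essentialSubspace
  have hρ := j.restrictEssential_injective hj
  refine ⟨V, inferInstance, inferInstance, inferInstance, j.restrictEssential, hρ,
    subset_antisymm ?_ fun S hS => ?_⟩
  · rintro _ ⟨q, rfl⟩
    exact ((hcpt q).comp_clm (Submodule.subtypeL _)).codRestrict _
      (Submodule.isClosed_topologicalClosure _)
  · let N := LinearMap.range (j.restrictEssential : Q →ₗ[ℂ] (V →L[ℂ] V))
    have hN : IsClosed (N : Set (V →L[ℂ] V)) := isClosed_range (B := V →L[ℂ] V) _ hρ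
    refine hS.mem_of_forall_rankOne_mem hN fun x y => ?_
    obtain ⟨q, hq⟩ := j.rankOne_mem_range_of_mem_essentialSubspace hj hrank x.2 y.2
    refine ⟨q, ?_⟩
    ext z
    exact congr($hq z)

end NonUnitalStarAlgHom

theorem TensorProduct.eq_zero_of_tmul_eq_zero {R M N : Type*} [Field R] [AddCommGroup M]
    [Module R M] [AddCommGroup N] [Module R N] {m : M} {n : N} (h : m ⊗ₜ[R] n = 0)
    (hn : n ≠ 0) : m = 0 := by
  obtain ⟨f, hf⟩ : ∃ f : Module.Dual R N, f n ≠ 0 := by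
    by_contra! h'
    exact hn ((Module.forall_dual_apply_eq_zero_iff R n).mp h')
  simpa [hf] using congr(TensorProduct.rid R M (f.lTensor M $h))

theorem IsCompactsOn.exists_minimal_projection {H : Type} [NormedAddCommGroup H]
    [InnerProductSpace ℂ H] [CompleteSpace H] {K : Type*} [NonUnitalCStarAlgebra K]
    (hK : IsCompactsOn H K) {e : H} (he : ‖e‖ = 1) :
    ∃ c : K, c ≠ 0 ∧ IsStarProjection c ∧ ∀ k, ∃ z : ℂ, c * k * c = z • c := by
  obtain ⟨φ, hφ, hrange⟩ := hK
  obtain ⟨c, hc⟩ : rankOne ℂ e e ∈ Set.range φ := hrange ▸ isCompactOperator_rankOne e e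
  have he0 : e ≠ 0 := ne_zero_of_norm_ne_zero (by simp [he])
  refine ⟨c, ?_, ⟨hφ ?_, hφ ?_⟩, fun k => ⟨inner ℂ (adjoint (φ k) e) e, hφ ?_⟩⟩
  · rintro rfl
    exact rankOne_ne_zero he0 he0 (by rw [← hc, map_zero])
  · rw [map_mul, hc]
    exact isIdempotentElem_rankOne_self he
  · rw [map_star, hc, star_eq_adjoint, adjoint_rankOne]
  · simp [hc, mul_def, rankOne_comp]

theorem IsCStarTensor.exists_hereditary_embedding {Q K T : Type*} [NonUnitalCStarAlgebra Q]
    [NonUnitalCStarAlgebra K] [NonUnitalCStarAlgebra T] (hT : IsCStarTensor Q K T) {c : K}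
    (hc0 : c ≠ 0) (hc : IsStarProjection c) (hcorner : ∀ k, ∃ z : ℂ, c * k * c = z • c) :
    ∃ ι : Q →⋆ₙₐ[ℂ] T, Function.Injective ι ∧
      ∀ (a : T) (r s : Q), ι r * a * ι s ∈ Set.range ι := by
  obtain ⟨t, hmul, hstar, hinj, hdense⟩ := hT.exists_pairing
  let ι : Q →⋆ₙₐ[ℂ] T :=
    { toFun q := t q c
      map_add' _ _ := by simp
      map_smul' _ _ := by simp
      map_zero' := by simp
      map_mul' _ _ := by rw [hmul, hc.isIdempotentElem.eq]
      map_star' _ := by rw [hstar, hc.isSelfAdjoint.star_eq] }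
  have hι : Function.Injective ι := by
    refine (injective_iff_map_eq_zero ι).mpr fun q hq => ?_
    refine TensorProduct.eq_zero_of_tmul_eq_zero (hinj ?_) hc0
    simpa [ι] using hq
  refine ⟨ι, hι, fun a r s => ?_⟩
  have hclosed : IsClosed {a : T | ι r * a * ι s ∈ Set.range ι} :=
    (NonUnitalStarAlgHom.isClosed_range ι hι).preimage (by fun_prop)
  refine closure_minimal ?_ hclosed (hdense a)
  rintro _ ⟨w, rfl⟩
  induction w using TensorProduct.induction_on with
  | zero => exact ⟨0, by simp⟩
  | tmul q k =>
    obtain ⟨z, hz⟩ := hcorner k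
    exact ⟨z • (r * q * s), by simp [ι, hmul, hz]⟩
  | add x y hx hy =>
    obtain ⟨qx, hqx⟩ := hx
    obtain ⟨qy, hqy⟩ := hy
    exact ⟨qx + qy, by simp_all [mul_add, add_mul]⟩

theorem elementary_of_tensor_compacts_elementary_general
    {Q : Type*} [NonUnitalCStarAlgebra Q]
    {K : Type*} [NonUnitalCStarAlgebra K] (hK : IsStdCompacts K)
    {T : Type*} [NonUnitalCStarAlgebra T] (hT : IsCStarTensor Q K T)
    (hTel : IsElementary T) :
    IsElementary Q := by
  obtain ⟨H, _, _, _, ψ, hψ, hψrange⟩ := hTel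
  obtain ⟨c, hc0, hc, hcorner⟩ :=
    hK.exists_minimal_projection (e := lp.single 2 0 1) (by simp [lp.norm_single])
  obtain ⟨ι, hι, hher⟩ := hT.exists_hereditary_embedding hc0 hc hcorner
  refine (ψ.comp ι).isElementary_of_rankOne_mem_range (hψ.comp hι)
    (fun q => hψrange.subset ⟨ι q, rfl⟩) fun r s x y => ?_
  obtain ⟨a, ha⟩ : rankOne ℂ x y ∈ Set.range ψ := hψrange ▸ isCompactOperator_rankOne x y
  obtain ⟨q, hq⟩ := hher a r (star s)
  refine ⟨q, ?_⟩
  simp [hq, ha, mul_def, comp_rankOne, rankOne_comp, map_star, star_eq_adjoint]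

/-- let `A` be a C*-algebra with closed two-sided ideals `J ⊴ I ⊴ A`, and
let `Q` be a C*-algebra realizing the quotient `I/J` (a surjective `*`-homomorphism
`I → Q` with kernel `J`).  If `(I/J) ⊗ K` is elementary (where `K` is the compacts on a
separable infinite-dimensional Hilbert space), then `I/J` is itself elementary. -/
theorem elementary_of_tensor_compacts_elementary
    {A : Type*} [NonUnitalCStarAlgebra A]
    (I J : NonUnitalStarSubalgebra ℂ A)
    [IsClosed (I : Set A)] [IsClosed (J : Set A)]
    (hI : ∀ a : A, ∀ x ∈ I, a * x ∈ I ∧ x * a ∈ I)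
    (hJ : ∀ a : A, ∀ x ∈ J, a * x ∈ J ∧ x * a ∈ J)
    (hJI : J ≤ I)
    {Q : Type*} [NonUnitalCStarAlgebra Q]
    (π : I →⋆ₙₐ[ℂ] Q) (hπ : Function.Surjective π)
    (hker : ∀ x : I, π x = 0 ↔ (x : A) ∈ J)
    {K : Type*} [NonUnitalCStarAlgebra K] (hK : IsStdCompacts K)
    {T : Type*} [NonUnitalCStarAlgebra T] (hT : IsCStarTensor Q K T)
    (hTel : IsElementary T) :
    IsElementary Q :=
  elementary_of_tensor_compacts_elementary_general hK hT hTel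
end
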